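/- arXiv:1401.0095 — 3 statements merged into one kernel-verified Lean document; each statement's English description precedes it below -/
import Mathlib

section
/- In a commutative ring R with unity, every m-irreducible element is strongly irreducible: if a nonunit a generates a principal ideal maximal among proper principal ideals, then whenever a = bc, a is a unit multiple of b or a unit multiple of c. -/
theorem m_irreducible_implies_strongly_irreducible {R : Type*} [CommRing R] [Nontrivial R]
    (a : R) (ha : ¬ IsUnit a)
    (hm : Ideal.span {a} ≠ (⊤ : Ideal R) ∧
      ∀ b : R, Ideal.span {a} ≤ Ideal.span {b} → Ideal.span {b} ≠ (⊤ : Ideal R) →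
        Ideal.span {a} = Ideal.span {b}) :
    ∀ b c : R, a = b * c →
      (∃ u : Rˣ, a = (u : R) * b) ∨ (∃ u : Rˣ, a = (u : R) * c) := by
  intro b c habc
  by_cases hb : IsUnit b
  · right
    obtain ⟨u, rfl⟩ := hb
    exact ⟨u, habc⟩
  by_cases hc : IsUnit c
  · left
    obtain ⟨u, rfl⟩ := hc
    exact ⟨u, by rw [habc]; ring⟩
  -- both b and c generate proper principal ideals containing (a)
  have hab : Ideal.span {a} ≤ Ideal.span ({b} : Set R) :=
    Ideal.span_singleton_le_span_singleton.mpr ⟨c, habc⟩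
  have hac : Ideal.span {a} ≤ Ideal.span ({c} : Set R) :=
    Ideal.span_singleton_le_span_singleton.mpr ⟨b, by rw [habc]; ring⟩
  have hbt : Ideal.span ({b} : Set R) ≠ ⊤ := by
    simpa [Ideal.span_singleton_eq_top] using hb
  have hct : Ideal.span ({c} : Set R) ≠ ⊤ := by
    simpa [Ideal.span_singleton_eq_top] using hc
  have heqb := hm.2 b hab hbt
  have heqc := hm.2 c hac hct
  -- b = a*t, c = a*s
  have hbmem : b ∈ Ideal.span ({a} : Set R) := heqb ▸ Ideal.mem_span_singleton_self b
  have hcmem : c ∈ Ideal.span ({a} : Set R) := heqc ▸ Ideal.mem_span_singleton_self c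
  obtain ⟨t, ht⟩ := Ideal.mem_span_singleton.mp hbmem
  obtain ⟨s, hs⟩ := Ideal.mem_span_singleton.mp hcmem
  obtain ⟨e, he⟩ : ∃ e : R, e = a * (t * s) := ⟨_, rfl⟩
  have hae : a * e = a := by
    nth_rewrite 2 [habc]
    rw [ht, hs, he]
    ring
  have hee : e * e = e := by
    calc e * e = (a * e) * (t * s) := by rw [he]; ring
    _ = e := by rw [hae, he]
  have hbe : b * e = b := by
    calc b * e = (a * e) * t := by rw [ht]; ring
    _ = b := by rw [hae, ht]
  -- e ∈ (b), so e = b * r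
  have hemem : e ∈ Ideal.span ({b} : Set R) := by
    rw [← heqb, Ideal.mem_span_singleton]
    exact ⟨t * s, he⟩
  obtain ⟨r, hr⟩ := Ideal.mem_span_singleton.mp hemem
  -- units u = a + (1-e), v = b + (1-e)
  have huval : (a + (1 - e)) * (t * s * e + (1 - e)) = 1 := by
    linear_combination (-e) * he - hae + (2 - t * s) * hee
  have hvval : (b + (1 - e)) * (r * e + (1 - e)) = 1 := by
    linear_combination (-e) * hr - hbe + (2 - r) * hee
  set u : Rˣ := ⟨a + (1 - e), t * s * e + (1 - e), huval, by rw [mul_comm]; exact huval⟩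
  set v : Rˣ := ⟨b + (1 - e), r * e + (1 - e), hvval, by rw [mul_comm]; exact hvval⟩
  have hue : (u : R) * e = a := by
    show (a + (1 - e)) * e = a
    calc (a + (1 - e)) * e = a * e + (e - e * e) := by ring
    _ = a := by rw [hae, hee]; ring
  have hve : (v : R) * e = b := by
    show (b + (1 - e)) * e = b
    calc (b + (1 - e)) * e = b * e + (e - e * e) := by ring
    _ = b := by rw [hbe, hee]; ring
  left
  refine ⟨u * v⁻¹, ?_⟩
  have hvinv : ((v⁻¹ : Rˣ) : R) * b = e := by
    rw [← hve, ← mul_assoc, ← Units.val_mul, inv_mul_cancel v, Units.val_one, one_mul]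
  calc a = (u : R) * e := hue.symm
  _ = (u : R) * (((v⁻¹ : Rˣ) : R) * b) := by rw [hvinv]
  _ = ((u * v⁻¹ : Rˣ) : R) * b := by rw [Units.val_mul]; ring
end

section
/- In a présimplifiable commutative ring R, every irreducible nonzero nonunit is very strongly irreducible: if a ≠ 0 is a nonunit with (a = bc implies (a) = (b) or (a) = (c)), then a = bc implies a ≅ b or a ≅ c. -/
theorem presimplifiable_irreducible_implies_vsi {R : Type*} [CommRing R] [Nontrivial R]
    (hpre : ∀ x y : R, x = x * y → x = 0 ∨ IsUnit y)
    (a : R) (ha0 : a ≠ 0) (ha : ¬ IsUnit a)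
    (hirr : ∀ b c : R, a = b * c →
      Ideal.span {a} = Ideal.span {b} ∨ Ideal.span {a} = Ideal.span {c}) :
    ∀ b c : R, a = b * c →
      ((Ideal.span {a} = Ideal.span {b} ∧
        ((a = 0 ∧ b = 0) ∨ ∀ r : R, a = r * b → IsUnit r)) ∨
       (Ideal.span {a} = Ideal.span {c} ∧
        ((a = 0 ∧ c = 0) ∨ ∀ r : R, a = r * c → IsUnit r))) := by
  intro b c habc
  have key : ∀ x : R, Ideal.span {a} = Ideal.span ({x} : Set R) →
      ∀ r : R, a = r * x → IsUnit r := by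
    intro x hx r hr
    have hxmem : x ∈ Ideal.span ({a} : Set R) := by
      rw [hx]; exact Ideal.mem_span_singleton_self x
    obtain ⟨s, hs⟩ := Ideal.mem_span_singleton.mp hxmem
    have : a = a * (r * s) := by rw [hs] at hr; linear_combination hr
    rcases hpre a (r * s) this with h0 | hu
    · exact absurd h0 ha0
    · exact isUnit_of_mul_isUnit_left hu
  rcases hirr b c habc with h | h
  · exact Or.inl ⟨h, Or.inr (key b h)⟩
  · exact Or.inr ⟨h, Or.inr (key c h)⟩
end

section
/- In a Noetherian commutative ring R, R is présimplifiable if and only if ∩_{n=1}^∞ (yⁿ) = 0 for every nonunit y ∈ R. -/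
theorem noetherian_presimplifiable_iff_powers_intersect_zero {R : Type*} [CommRing R]
    [Nontrivial R] [IsNoetherianRing R] :
    (∀ x y : R, x = x * y → x = 0 ∨ IsUnit y) ↔
      ∀ y : R, ¬ IsUnit y → (⨅ n : ℕ, Ideal.span {y ^ (n + 1)}) = (⊥ : Ideal R) := by
  constructor
  · intro H y hy
    rw [eq_bot_iff]
    intro x hx
    rw [Ideal.mem_iInf] at hx
    have hx' : x ∈ (⨅ i : ℕ, (Ideal.span {y}) ^ i • ⊤ : Submodule R R) := by
      rw [Submodule.mem_iInf]
      intro i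
      cases i with
      | zero => simp
      | succ n =>
        rw [smul_eq_mul, Ideal.mul_top, Ideal.span_singleton_pow]
        exact hx n
    obtain ⟨r, hr⟩ := (Ideal.mem_iInf_smul_pow_eq_bot_iff (Ideal.span {y}) x).mp hx'
    have hr2 : x = x * (r : R) := by
      rw [smul_eq_mul] at hr; rw [mul_comm]; exact hr.symm
    rcases H x r hr2 with h0 | hu
    · simpa using h0
    · obtain ⟨a, ha⟩ := Ideal.mem_span_singleton.mp r.prop
      exact absurd (isUnit_of_dvd_unit ⟨a, ha⟩ hu) hy
  · intro h x y hxy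
    by_cases hy : IsUnit y
    · exact Or.inr hy
    refine Or.inl ?_
    have hx : x ∈ (⨅ n : ℕ, Ideal.span {y ^ (n + 1)}) := by
      rw [Ideal.mem_iInf]
      intro n
      have : x = x * y ^ (n + 1) := by
        induction n with
        | zero => simpa using hxy
        | succ k ih => rw [pow_succ, ← mul_assoc, ← ih]; exact hxy
      rw [Ideal.mem_span_singleton]
      exact ⟨x, by rw [mul_comm]; exact this⟩
    rw [h y hy] at hx
    simpa using hx
end
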